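/- Let N ∈ ℕ, let α : Fin N → ℝ, let c₁ > 0 and c₂ > 0 be real, let ℓ ∈ ℕ with 1 ≤ ℓ ≤ N + 1, define θ_k = α_k + 2π for the first ℓ − 1 indices k and θ_k = α_k otherwise, and define F_ℓ : ℂ → ℂ by F_ℓ(s) = exp(−s · log c₁) · ζ_R(c₂ · s) · Σ_{k=0}^{N−1} exp(−i·θ_k·s). Then exp(−F_ℓ′(0)) = (−1)^{ℓ−1} · c₁^{−N/2} · (2π)^{c₂N/2} · exp(−(i/2)·Σ_{k=0}^{N−1} α_k). -/

import Mathlib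

open Complex Real

/-! By the product rule and `ζ(0) = -1/2`, `ζ'(0) = -log(2π)/2`, the derivative `F'(0)` equals
`(N/2) log c₁ - (c₂ N/2) log(2π) + (i/2) ∑ θₖ`. Shifting the first `ℓ - 1` angles by `2π` adds
`(ℓ - 1) π i` to `(i/2) ∑ θₖ`, which after exponentiation is the sign `(-1)^(ℓ-1)`. -/

theorem hasDerivAt_riemannZeta_zero :
    HasDerivAt riemannZeta (-(Real.log (2 * π) : ℂ) / 2) 0 := by
  have h := (differentiableAt_riemannZeta zero_ne_one).hasDerivAt
  rwa [deriv_riemannZeta_zero, ← ofReal_ofNat, ← ofReal_mul,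
    ← ofReal_log (by positivity)] at h

theorem hasDerivAt_sum_cexp_neg_mul_zero {ι : Type*} (u : Finset ι) (w : ι → ℂ) :
    HasDerivAt (fun s ↦ ∑ k ∈ u, cexp (-(w k * s))) (-∑ k ∈ u, w k) 0 := by
  rw [← Finset.sum_neg_distrib]
  refine HasDerivAt.fun_sum fun k _ ↦ ?_
  simpa using ((hasDerivAt_id (0 : ℂ)).const_mul (w k)).neg.cexp

theorem hasDerivAt_cexp_mul_riemannZeta_mul_sum_zero {ι : Type*} [Fintype ι]
    (L c : ℂ) (w : ι → ℂ) :
    HasDerivAt (fun s ↦ cexp (-s * L) * riemannZeta (c * s) * ∑ k, cexp (-(w k * s)))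
      (Fintype.card ι / 2 * L - c * Fintype.card ι / 2 * Real.log (2 * π) +
        (∑ k, w k) / 2) 0 := by
  have hexp : HasDerivAt (fun s : ℂ ↦ cexp (-s * L)) (-L) 0 := by
    simpa using ((hasDerivAt_id (0 : ℂ)).neg.mul_const L).cexp
  have hzeta :
      HasDerivAt (fun s ↦ riemannZeta (c * s)) (-(Real.log (2 * π) : ℂ) / 2 * c) 0 := by
    have := hasDerivAt_riemannZeta_zero
    rw [← mul_zero c] at this
    exact this.comp 0 (by simpa using (hasDerivAt_id (0 : ℂ)).const_mul c)
  refine ((hexp.fun_mul hzeta).fun_mul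
    (hasDerivAt_sum_cexp_neg_mul_zero Finset.univ w)).congr_deriv ?_
  simp only [mul_zero, neg_zero, zero_mul, Complex.exp_zero, riemannZeta_zero,
    Finset.sum_const, Finset.card_univ, nsmul_eq_mul, mul_one, one_mul]
  ring

theorem Fin.sum_ite_val_lt_add {M : Type*} [AddCommMonoid M] {N : ℕ} (a : Fin N → M) (t : M)
    (m : ℕ) :
    ∑ k : Fin N, (if (k : ℕ) < m then a k + t else a k) = ∑ k, a k + min N m • t := by
  have hsplit : ∀ k : Fin N,
      (if (k : ℕ) < m then a k + t else a k) = a k + if (k : ℕ) < m then t else 0 := by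
    intro k; split_ifs <;> simp
  simp_rw [hsplit, Finset.sum_add_distrib, Finset.sum_ite, Finset.sum_const_zero, add_zero,
    Finset.sum_const, Fin.card_filter_val_lt]

theorem cexp_neg_nat_mul_pi_mul_I (m : ℕ) : cexp (-(m * π * I)) = (-1) ^ m := by
  rw [show -(m * π * I) = m * -(π * I) by ring, Complex.exp_nat_mul, Complex.exp_neg,
    exp_pi_mul_I]
  norm_num

theorem power_growth_determinant_general
    (N : ℕ) (α : Fin N → ℝ) (c₁ c₂ : ℝ) (hc₁ : 0 < c₁)
    (ℓ : ℕ) (hℓ₂ : ℓ ≤ N + 1)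
    (θ : Fin N → ℝ)
    (hθ : ∀ k : Fin N, θ k = if (k : ℕ) < ℓ - 1 then α k + 2 * Real.pi else α k)
    (F : ℂ → ℂ)
    (hF : ∀ s : ℂ, F s = Complex.exp (-s * Real.log c₁) * riemannZeta (c₂ * s) *
      ∑ k : Fin N, Complex.exp (-(Complex.I * θ k * s))) :
    Complex.exp (-(deriv F 0)) =
      (-1) ^ (ℓ - 1) * (c₁ ^ (-(N : ℝ) / 2) : ℝ) * ((2 * Real.pi) ^ (c₂ * N / 2) : ℝ) *
        Complex.exp (-(Complex.I / 2) * ∑ k : Fin N, (α k : ℂ)) := by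
  have hF' := hasDerivAt_cexp_mul_riemannZeta_mul_sum_zero (Real.log c₁) c₂
    fun k ↦ I * θ k
  rw [← funext hF, Fintype.card_fin] at hF'
  have hθsum : ∑ k, θ k = ∑ k, α k + (ℓ - 1 : ℕ) * (2 * π) := by
    rw [funext hθ, Fin.sum_ite_val_lt_add, min_eq_right (by omega), nsmul_eq_mul]
  rw [hF'.deriv, ← Finset.mul_sum, ← ofReal_sum, hθsum, ← cexp_neg_nat_mul_pi_mul_I,
    Real.rpow_def_of_pos hc₁, Real.rpow_def_of_pos (by positivity), ofReal_exp, ofReal_exp,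
    ← Complex.exp_add, ← Complex.exp_add, ← Complex.exp_add]
  congr 1
  push_cast
  ring

/-- The spectral determinant for eigenvalues with power growth on `N` rays, with the
branch cut between the `(ℓ−1)`-st and `ℓ`-th ray:
`exp(−F_ℓ′(0)) = (−1)^{ℓ−1} c₁^{−N/2} (2π)^{c₂N/2} exp(−(i/2) Σ_k α_k)`. -/
theorem power_growth_determinant
    (N : ℕ) (α : Fin N → ℝ) (c₁ c₂ : ℝ) (hc₁ : 0 < c₁) (hc₂ : 0 < c₂)
    (ℓ : ℕ) (hℓ₁ : 1 ≤ ℓ) (hℓ₂ : ℓ ≤ N + 1)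
    (θ : Fin N → ℝ)
    (hθ : ∀ k : Fin N, θ k = if (k : ℕ) < ℓ - 1 then α k + 2 * Real.pi else α k)
    (F : ℂ → ℂ)
    (hF : ∀ s : ℂ, F s = Complex.exp (-s * Real.log c₁) * riemannZeta (c₂ * s) *
      ∑ k : Fin N, Complex.exp (-(Complex.I * θ k * s))) :
    Complex.exp (-(deriv F 0)) =
      (-1) ^ (ℓ - 1) * (c₁ ^ (-(N : ℝ) / 2) : ℝ) * ((2 * Real.pi) ^ (c₂ * N / 2) : ℝ) *
        Complex.exp (-(Complex.I / 2) * ∑ k : Fin N, (α k : ℂ)) :=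
  power_growth_determinant_general N α c₁ c₂ hc₁ ℓ hℓ₂ θ hθ F hF
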